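/- arXiv:math/9509229 — 4 statements merged into one kernel-verified Lean document; each statement's English description precedes it below -/
import Mathlib

section
/- Ramification step (Claim 1.2): Let ε > 0 be real, and let t > 0, n* > 1, k(*) > 0 be natural numbers. There exist a constant c_1 ∈ ℕ (depending only on k(*) and n*) and a threshold (depending on 1/ε, t, k(*), n*) such that whenever m* exceeds the threshold and m ≥ 2^{(1+ε)·c_1·(m*)^{n*}}, the following holds. Suppose A ⊆ ℕ with |A| > m, and for each k < k(*) we have a function f_k with domain [A]^{n*} (arbitrary codomain), a function h_k : [A]^{n*} → ℕ, and a function g with domain [A]^{n*} whose range has at most t members. Then there exist A* ⊆ A with |A*| > m* and j* ∈ A with j* > sup(A*) such that for every k < k(*) and u, v ∈ [A*]^{n*-1}: (α) if u, v are neighbors then for all i ∈ A*_{>sup(u∪v)}: f_k(u ∪ {i}) = f_k(v ∪ {i}) iff f_k(u ∪ {j*}) = f_k(v ∪ {j*}); (β) for every i_0 < i_1 from A*_{>sup(u)}: f_k(u ∪ {i_0}) = f_k(u ∪ {i_1}) iff f_k(u ∪ {i_0}) = f_k(u ∪ {j*}); (γ) for all i ∈ A*_{>sup(u)}: g(u ∪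 {i}) = g(u ∪ {j*}); (δ) either h_k(u) ≥ i for all i ∈ A*_{>sup(u)} ∪ {j*}, or h_k(u) < i for all i ∈ A*_{>sup(u)} ∪ {j*}. -/
/-- Finite subsets `u, v` of `ℕ` are neighbors: same size, they differ in exactly
one element, and the differing elements sit in the same position relative to the
common part. -/
def Neighbors (u v : Finset ℕ) : Prop :=
  u.card = v.card ∧ (u \ v).card = 1 ∧
    ∀ k ∈ u \ v, ∀ l ∈ v \ u, ∀ m ∈ u ∩ v, (k < m ↔ l < m)

/-- `above A u` is `A_{> sup u}`, the set of members of `A` greater than every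
member of `u` (with the convention `A_{> sup ∅} = A`). -/
def above (A u : Finset ℕ) : Finset ℕ := A.filter fun j => ∀ x ∈ u, x < j

/-!
An Erdős–Rado end-homogeneity argument. The *type* of a point `i` over a finite set `s` is the
set of yes/no questions about `s` that `i` answers positively: for `|s| = n* - 1` whether
`g (s ∪ {i})` equals a given `r ∈ R` and whether `i ≤ h k s`; for `|s| = n*` whether replacing
some `x ∈ s` by `i` preserves `f k s`, and whether replacing `x` or `y` by `i` gives the same value
of `f k`. Building `E` greedily — add the least remaining candidate `a`, then keep only the largest
class of candidates having equal types over all new sets containing `a` — yields an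
end-homogeneous `E` of size `2 m*` as soon as `|A| ≥ (2 ^ w + 1) ^ (2 m*)`, where `2 ^ w` bounds
the number of type vectors at one step. Counting questions gives
`w ≤ (t + k(*)) (2 m*) ^ (n* - 2) + k(*) n* (n* + 1) (2 m*) ^ (n* - 1)`: the `t`-dependent
questions live one level lower, so they only affect lower order terms, which the threshold on
`m*` absorbs into `ε`. With `j* = max E` and `A* = E \ {j*}`, each of (α)–(δ) says that `i` and
`j*` answer one particular question alike.
-/

open Finset

lemma mem_above {A s : Finset ℕ} {i : ℕ} : i ∈ above A s ↔ i ∈ A ∧ ∀ x ∈ s, x < i :=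
  mem_filter

lemma Neighbors.exists_union_eq_insert {u v : Finset ℕ} (huv : Neighbors u v) :
    ∃ x ∉ v, ∃ y ∉ u, u ∪ v = insert x v ∧ u ∪ v = insert y u := by
  obtain ⟨hcard, hx, -⟩ := huv
  have hy : (v \ u).card = 1 := by
    have := card_sdiff_add_card_inter u v
    have := card_sdiff_add_card_inter v u
    rw [inter_comm] at this
    omega
  obtain ⟨x, hx⟩ := card_eq_one.1 hx
  obtain ⟨y, hy⟩ := card_eq_one.1 hy
  refine ⟨x, fun h => ?_, y, fun h => ?_, ?_, ?_⟩
  · simpa [h] using (hx ▸ mem_singleton_self x : x ∈ u \ v)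
  · simpa [h] using (hy ▸ mem_singleton_self y : y ∈ v \ u)
  · rw [← sdiff_union_self_eq_union, hx, singleton_union]
  · rw [union_comm, ← sdiff_union_self_eq_union, hy, singleton_union]

section EndHomogeneous

variable {Γ : Type*}

def newSets (D : Finset ℕ) (a : ℕ) : Finset (Finset ℕ) :=
  (insert a D).powerset.filter (a ∈ ·)

lemma mem_newSets {D s : Finset ℕ} {a : ℕ} : s ∈ newSets D a ↔ s ⊆ insert a D ∧ a ∈ s := by
  simp [newSets]

lemma card_filter_newSets_le (D : Finset ℕ) (a d : ℕ) :
    ((newSets D a).filter (·.card = d)).card ≤ D.card.choose (d - 1) := by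
  rw [← card_powersetCard]
  refine card_le_card_of_injOn (·.erase a) (fun s hs => ?_) (fun s hs s' hs' hss' => ?_)
  · simp only [coe_filter, mem_newSets, Set.mem_ofPred_eq] at hs
    rw [mem_coe, mem_powersetCard, card_erase_of_mem hs.1.2, hs.2]
    exact ⟨subset_insert_iff.1 hs.1.1, rfl⟩
  · simp only [coe_filter, mem_newSets, Set.mem_ofPred_eq] at hs hs'
    rw [← insert_erase hs.1.2, ← insert_erase hs'.1.2]
    exact congrArg (insert a) hss'

variable (c : Finset ℕ → ℕ → Γ)

def IsEndHomogeneousOver (D E : Finset ℕ) : Prop :=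
  ∀ s ⊆ D ∪ E, s.Nonempty → ∀ i ∈ above E s, ∀ j ∈ above E s, c s i = c s j

def IsHomogeneousOver (D B : Finset ℕ) : Prop :=
  ∀ s ⊆ D, s.Nonempty → ∀ i ∈ B, ∀ j ∈ B, c s i = c s j

variable {c} {palette : Finset ℕ → Finset Γ}

lemma IsHomogeneousOver.exists_insert (hc : ∀ s i, c s i ∈ palette s) {D B : Finset ℕ}
    {a P q : ℕ} (hB : IsHomogeneousOver c D B) (hP : ∏ s ∈ newSets D a, (palette s).card ≤ P)
    (hcard : P * q ≤ B.card) :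
    ∃ B' ⊆ B, q ≤ B'.card ∧ IsHomogeneousOver c (insert a D) B' := by
  classical
  set colours := (newSets D a).pi palette
  have hmaps : ∀ i ∈ B, (fun s (_ : s ∈ newSets D a) => c s i) ∈ colours :=
    fun i _ => mem_pi.2 fun s _ => hc s i
  have hne : colours.Nonempty := pi_nonempty.2 fun s _ => ⟨c s 0, hc s 0⟩
  obtain ⟨y, -, hy⟩ := exists_le_card_fiber_of_mul_le_card_of_maps_to hmaps hne
    ((Nat.mul_le_mul_right q ((card_pi _ _).trans_le hP)).trans hcard)
  refine ⟨_, filter_subset _ _, hy, fun s hs hsne i hi j hj => ?_⟩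
  rw [mem_filter] at hi hj
  by_cases has : a ∈ s
  · have hsa : s ∈ newSets D a := mem_newSets.2 ⟨hs, has⟩
    exact (congrFun₂ hi.2 s hsa).trans (congrFun₂ hj.2 s hsa).symm
  · exact hB s ((subset_insert_iff_of_notMem has).1 hs) hsne i hi.1 j hj.1

lemma IsEndHomogeneousOver.shift {D B E : Finset ℕ} {a : ℕ}
    (hE : IsEndHomogeneousOver c (insert a D) E) (hB : IsHomogeneousOver c D B) (haB : a ∈ B)
    (hEB : E ⊆ B) (haE : ∀ y ∈ E, a < y) :
    IsEndHomogeneousOver c D (insert a E) := by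
  intro s hs hsne i hi j hj
  by_cases hsD : s ⊆ D
  · have hsub : insert a E ⊆ B := insert_subset haB hEB
    exact hB s hsD hsne i (hsub (mem_above.1 hi).1) j (hsub (mem_above.1 hj).1)
  rw [union_insert, ← insert_union] at hs
  obtain ⟨x, hxs, hxD⟩ := not_subset.1 hsD
  have hax : a ≤ x := by
    rcases mem_union.1 (hs hxs) with hx | hxE
    · exact le_of_eq ((mem_insert.1 hx).resolve_right hxD).symm
    · exact (haE x hxE).le
  have habove : ∀ i ∈ above (insert a E) s, i ∈ above E s := fun i hi => by
    rw [mem_above] at hi ⊢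
    exact ⟨(mem_insert.1 hi.1).resolve_left (lt_of_le_of_lt hax (hi.2 x hxs)).ne', hi.2⟩
  exact hE s hs hsne i (habove i hi) j (habove j hj)

lemma exists_isEndHomogeneousOver (hc : ∀ s i, c s i ∈ palette s) {N P : ℕ}
    (hP : ∀ D a, D.card < N → ∏ s ∈ newSets D a, (palette s).card ≤ P) :
    ∀ r (D B : Finset ℕ), D.card + r ≤ N → (P + 1) ^ r ≤ B.card → (∀ x ∈ D, ∀ y ∈ B, x < y) →
      IsHomogeneousOver c D B → ∃ E ⊆ B, E.card = r ∧ IsEndHomogeneousOver c D E := by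
  intro r
  induction r with
  | zero =>
    exact fun D B _ _ _ _ => ⟨∅, empty_subset _, rfl, by simp [IsEndHomogeneousOver, above]⟩
  | succ r ih =>
    intro D B hN hB hDB hhom
    have hBne : B.Nonempty := card_pos.1 (lt_of_lt_of_le (by positivity) hB)
    set a := B.min' hBne
    have haB : a ∈ B := B.min'_mem hBne
    have ha_lt : ∀ y ∈ B.erase a, a < y := fun y hy =>
      lt_of_le_of_ne (B.min'_le y (mem_of_mem_erase hy)) (ne_of_mem_erase hy).symm
    have hcard : P * (P + 1) ^ r ≤ (B.erase a).card := by
      have hpos : 1 ≤ (P + 1) ^ r := Nat.one_le_pow _ _ (Nat.succ_pos P)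
      have hsplit : (P + 1) ^ (r + 1) = P * (P + 1) ^ r + (P + 1) ^ r := by ring
      rw [card_erase_of_mem haB]
      omega
    obtain ⟨B', hB'B, hB'card, hB'hom⟩ :=
      IsHomogeneousOver.exists_insert hc
        (fun s hs hne i hi j hj => hhom s hs hne i (mem_of_mem_erase hi) j (mem_of_mem_erase hj))
        (hP D a (by omega)) hcard
    have haD : a ∉ D := fun h => (hDB a h a haB).false
    have horder : ∀ x ∈ insert a D, ∀ y ∈ B', x < y := fun x hx y hy => by
      rcases mem_insert.1 hx with rfl | hxD
      · exact ha_lt y (hB'B hy)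
      · exact hDB x hxD y (mem_of_mem_erase (hB'B hy))
    obtain ⟨E, hEB', rfl, hE⟩ := ih (insert a D) B' (by rw [card_insert_of_notMem haD]; omega)
      hB'card horder hB'hom
    have hEB : E ⊆ B.erase a := hEB'.trans hB'B
    exact ⟨insert a E, insert_subset haB (hEB.trans (erase_subset a B)),
      card_insert_of_notMem fun h => (ha_lt a (hEB h)).false,
      hE.shift hhom haB (hEB.trans (erase_subset a B)) fun y hy => ha_lt y (hEB hy)⟩

lemma exists_isEndHomogeneousOver_empty (hc : ∀ s i, c s i ∈ palette s) {N P : ℕ}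
    (hP : ∀ D a, D.card < N → ∏ s ∈ newSets D a, (palette s).card ≤ P) {A : Finset ℕ}
    (hA : (P + 1) ^ N ≤ A.card) : ∃ E ⊆ A, E.card = N ∧ IsEndHomogeneousOver c ∅ E :=
  exists_isEndHomogeneousOver hc hP N ∅ A (by simp) hA (by simp)
    fun s hs hne => absurd (subset_empty.1 hs) hne.ne_empty

lemma IsEndHomogeneousOver.apply_eq_max' {E : Finset ℕ} (hE : IsEndHomogeneousOver c ∅ E)
    (hne : E.Nonempty) {s : Finset ℕ} (hs : s ⊆ E.erase (E.max' hne)) (hsne : s.Nonempty) {i : ℕ}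
    (hi : i ∈ above (E.erase (E.max' hne)) s) : c s i = c s (E.max' hne) := by
  rw [mem_above] at hi
  refine hE s (by simpa using hs.trans (erase_subset _ _)) hsne i
    (mem_above.2 ⟨mem_of_mem_erase hi.1, hi.2⟩) _ (mem_above.2 ⟨max'_mem _ _, fun x hx => ?_⟩)
  exact lt_max'_of_mem_erase_max' _ _ (hs hx)

end EndHomogeneous

section Questions

inductive Question (β : Type*)
  | gValue (r : β)
  | hBound (k : ℕ)
  | fReplace (k x : ℕ)
  | fReplacePair (k x y : ℕ)

variable {α β : Type*} (f : ℕ → Finset ℕ → α) (h : ℕ → Finset ℕ → ℕ) (g : Finset ℕ → β)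

def Question.Holds (s : Finset ℕ) (i : ℕ) : Question β → Prop
  | gValue r => g (insert i s) = r
  | hBound k => i ≤ h k s
  | fReplace k x => f k (insert i (s.erase x)) = f k s
  | fReplacePair k x y => f k (insert i (s.erase x)) = f k (insert i (s.erase y))

variable (n kstar : ℕ) (R : Finset β)

open Classical in
noncomputable def questions (s : Finset ℕ) : Finset (Question β) :=
  (if s.card = n then R.image .gValue ∪ (range kstar).image .hBound else ∅) ∪
  (if s.card = n + 1 then (range kstar ×ˢ s).image (fun p => .fReplace p.1 p.2) ∪
      (range kstar ×ˢ s ×ˢ s).image (fun p => .fReplacePair p.1 p.2.1 p.2.2) else ∅)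

open Classical in
noncomputable def questionType (s : Finset ℕ) (i : ℕ) : Finset (Question β) :=
  (questions n kstar R s).filter (·.Holds f h g s i)

lemma questionType_mem_powerset (s : Finset ℕ) (i : ℕ) :
    questionType f h g n kstar R s i ∈ (questions n kstar R s).powerset := by
  classical exact mem_powerset.2 (filter_subset _ _)

lemma card_questions_le (s : Finset ℕ) :
    (questions n kstar R s).card ≤ (if s.card = n then R.card + kstar else 0) +
      (if s.card = n + 1 then kstar * (n + 1) * (n + 2) else 0) := by
  classical
  refine (card_union_le _ _).trans (add_le_add ?_ ?_) <;> split_ifs with hs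
  · exact (card_union_le _ _).trans
      (add_le_add card_image_le (card_image_le.trans (card_range _).le))
  · simp
  · refine (card_union_le _ _).trans ((add_le_add card_image_le card_image_le).trans ?_)
    simp only [card_product, card_range, hs]
    nlinarith
  · simp

lemma sum_card_questions_newSets_le (D : Finset ℕ) (a : ℕ) :
    ∑ s ∈ newSets D a, (questions n kstar R s).card ≤
      (R.card + kstar) * D.card.choose (n - 1) + kstar * (n + 1) * (n + 2) * D.card.choose n := by
  calc ∑ s ∈ newSets D a, (questions n kstar R s).card
      ≤ ∑ s ∈ newSets D a, ((if s.card = n then R.card + kstar else 0) +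
          (if s.card = n + 1 then kstar * (n + 1) * (n + 2) else 0)) :=
        sum_le_sum fun s _ => card_questions_le n kstar R s
    _ = (R.card + kstar) * ((newSets D a).filter (·.card = n)).card +
          kstar * (n + 1) * (n + 2) * ((newSets D a).filter (·.card = n + 1)).card := by
        simp only [sum_add_distrib, sum_ite, sum_const_zero, sum_const, smul_eq_mul, add_zero]
        ring
    _ ≤ _ := by
        gcongr
        · exact card_filter_newSets_le D a n
        · exact card_filter_newSets_le D a (n + 1)

lemma prod_card_powerset_questions_le {D : Finset ℕ} {N : ℕ} (hD : D.card ≤ N) (a : ℕ) :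
    ∏ s ∈ newSets D a, (questions n kstar R s).powerset.card ≤
      2 ^ ((R.card + kstar) * N ^ (n - 1) + kstar * (n + 1) * (n + 2) * N ^ n) := by
  simp_rw [card_powerset, prod_pow_eq_pow_sum]
  refine Nat.pow_le_pow_right two_pos ((sum_card_questions_newSets_le n kstar R D a).trans ?_)
  gcongr
  · exact (Nat.choose_le_pow _ _).trans (Nat.pow_le_pow_left hD _)
  · exact (Nat.choose_le_pow _ _).trans (Nat.pow_le_pow_left hD _)

def TypesAgreeAt (A : Finset ℕ) (j : ℕ) : Prop :=
  ∀ s ⊆ A, s.Nonempty → ∀ i ∈ above A s, ∀ q ∈ questions n kstar R s,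
    (q.Holds f h g s i ↔ q.Holds f h g s j)

variable {f h g n kstar R} {A u v : Finset ℕ} {j k : ℕ}

lemma IsEndHomogeneousOver.typesAgreeAt {E : Finset ℕ}
    (hE : IsEndHomogeneousOver (questionType f h g n kstar R) ∅ E) (hne : E.Nonempty) :
    TypesAgreeAt f h g n kstar R (E.erase (E.max' hne)) (E.max' hne) :=
  fun s hs hsne i hi => by
    classical exact filter_inj'.1 (hE.apply_eq_max' hne hs hsne hi)

lemma TypesAgreeAt.g_eq (hag : TypesAgreeAt f h g n kstar R A j) (hn : n ≠ 0)
    (hgR : ∀ w ∈ A.powersetCard (n + 1), g w ∈ R) (hu : u ∈ A.powersetCard n) {i : ℕ}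
    (hi : i ∈ above A u) : g (insert i u) = g (insert j u) := by
  rw [mem_powersetCard] at hu
  have hiu : i ∉ u := fun h => ((mem_above.1 hi).2 i h).false
  have hgR : g (insert i u) ∈ R := hgR _ <| mem_powersetCard.2
    ⟨insert_subset (mem_above.1 hi).1 hu.1, by rw [card_insert_of_notMem hiu, hu.2]⟩
  have hq : .gValue (g (insert i u)) ∈ questions n kstar R u := by
    simp [questions, hu.2, hgR]
  exact ((hag u hu.1 (card_pos.1 (by omega)) i hi _ hq).1 rfl).symm

lemma TypesAgreeAt.forall_le_or_forall_lt (hag : TypesAgreeAt f h g n kstar R A j) (hn : n ≠ 0)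
    (hu : u ∈ A.powersetCard n) (hk : k < kstar) :
    (∀ i ∈ insert j (above A u), i ≤ h k u) ∨ (∀ i ∈ insert j (above A u), h k u < i) := by
  rw [mem_powersetCard] at hu
  have hq : .hBound k ∈ questions n kstar R u := by
    simp [questions, hu.2, hk]
  have hiff : ∀ i ∈ insert j (above A u), (i ≤ h k u ↔ j ≤ h k u) := fun i hi => by
    rcases mem_insert.1 hi with rfl | hi
    · rfl
    · exact hag u hu.1 (card_pos.1 (by omega)) i hi _ hq
  by_cases hj : j ≤ h k u
  · exact .inl fun i hi => (hiff i hi).2 hj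
  · exact .inr fun i hi => not_le.1 fun hle => hj ((hiff i hi).1 hle)

lemma TypesAgreeAt.f_eq_iff_of_lt (hag : TypesAgreeAt f h g n kstar R A j)
    (hu : u ∈ A.powersetCard n) (hk : k < kstar) {i₀ i₁ : ℕ} (hi₀ : i₀ ∈ above A u)
    (hi₁ : i₁ ∈ above A u) (hlt : i₀ < i₁) :
    f k (insert i₀ u) = f k (insert i₁ u) ↔ f k (insert i₀ u) = f k (insert j u) := by
  rw [mem_powersetCard] at hu
  rw [mem_above] at hi₀ hi₁
  have hi₀u : i₀ ∉ u := fun h => (hi₀.2 i₀ h).false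
  have hs : (insert i₀ u).card = n + 1 := by rw [card_insert_of_notMem hi₀u, hu.2]
  have hq : .fReplace k i₀ ∈ questions n kstar R (insert i₀ u) := by
    simp [questions, hs, hk]
  have hi₁s : i₁ ∈ above A (insert i₀ u) := mem_above.2
    ⟨hi₁.1, fun x hx => (mem_insert.1 hx).elim (· ▸ hlt) fun hx => hi₁.2 x hx⟩
  have := hag _ (insert_subset hi₀.1 hu.1) (insert_nonempty _ _) i₁ hi₁s _ hq
  simpa only [Question.Holds, erase_insert hi₀u, eq_comm] using this

lemma TypesAgreeAt.f_eq_iff_of_neighbors (hag : TypesAgreeAt f h g n kstar R A j)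
    (hu : u ∈ A.powersetCard n) (hv : v ∈ A.powersetCard n) (hk : k < kstar)
    (huv : Neighbors u v) {i : ℕ} (hi : i ∈ above A (u ∪ v)) :
    f k (insert i u) = f k (insert i v) ↔ f k (insert j u) = f k (insert j v) := by
  classical
  rw [mem_powersetCard] at hu hv
  obtain ⟨x, hxv, y, hyu, hx, hy⟩ := huv.exists_union_eq_insert
  have hs : (u ∪ v).card = n + 1 := by rw [hx, card_insert_of_notMem hxv, hv.2]
  have hxs : x ∈ u ∪ v := hx ▸ mem_insert_self x v
  have hys : y ∈ u ∪ v := hy ▸ mem_insert_self y u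
  have hq : .fReplacePair k y x ∈ questions n kstar R (u ∪ v) := by
    have hkyx : (k, y, x) ∈ range kstar ×ˢ (u ∪ v) ×ˢ (u ∪ v) :=
      mem_product.2 ⟨mem_range.2 hk, mem_product.2 ⟨hys, hxs⟩⟩
    rw [questions, if_neg (by omega), if_pos hs]
    exact mem_union_right _ (mem_union_right _ (mem_image_of_mem _ hkyx))
  have hex : (u ∪ v).erase x = v := by rw [hx, erase_insert hxv]
  have hey : (u ∪ v).erase y = u := by rw [hy, erase_insert hyu]
  have := hag _ (union_subset hu.1 hv.1) (hx ▸ insert_nonempty x v) i hi _ hq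
  simpa only [Question.Holds, hex, hey] using this

lemma TypesAgreeAt.ramification (hag : TypesAgreeAt f h g n kstar R A j) (hn : n ≠ 0)
    (hgR : ∀ w ∈ A.powersetCard (n + 1), g w ∈ R) :
    ∀ k < kstar, ∀ u ∈ A.powersetCard n, ∀ v ∈ A.powersetCard n,
      (Neighbors u v → ∀ i ∈ above A (u ∪ v),
        (f k (insert i u) = f k (insert i v) ↔ f k (insert j u) = f k (insert j v))) ∧
      (∀ i₀ ∈ above A u, ∀ i₁ ∈ above A u, i₀ < i₁ →
        (f k (insert i₀ u) = f k (insert i₁ u) ↔ f k (insert i₀ u) = f k (insert j u))) ∧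
      (∀ i ∈ above A u, g (insert i u) = g (insert j u)) ∧
      ((∀ i ∈ insert j (above A u), i ≤ h k u) ∨ (∀ i ∈ insert j (above A u), h k u < i)) :=
  fun _ hk _ hu _ hv =>
    ⟨fun huv _ hi => hag.f_eq_iff_of_neighbors hu hv hk huv hi,
      fun _ hi₀ _ hi₁ hlt => hag.f_eq_iff_of_lt hu hk hi₀ hi₁ hlt,
      fun _ hi => hag.g_eq hn hgR hu hi, hag.forall_le_or_forall_lt hn hu hk⟩

end Questions

lemma add_one_mul_two_mul_le {n r t k M : ℕ} (hn : n ≠ 0) (hr : r ≤ t) :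
    ((r + k) * (2 * M) ^ (n - 1) + k * (n + 1) * (n + 2) * (2 * M) ^ n + 1) * (2 * M) ≤
      (1 + t + k) * 2 ^ (n + 1) * M ^ n + k * (n + 1) * (n + 2) * 2 ^ (n + 1) * M ^ (n + 1) := by
  obtain ⟨n, rfl⟩ := Nat.exists_eq_add_one_of_ne_zero hn
  have hM : M ≤ M ^ (n + 1) := Nat.le_self_pow (Nat.succ_ne_zero n) M
  have h2 : 2 ≤ 2 ^ (n + 2) := Nat.le_self_pow (by omega) 2
  rw [Nat.add_sub_cancel]
  calc _ = (r + k) * 2 ^ (n + 1) * M ^ (n + 1) +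
        k * (n + 1 + 1) * (n + 1 + 2) * 2 ^ (n + 1 + 1) * M ^ (n + 1 + 1) + 2 * M := by ring
    _ ≤ _ := by
      have : (r + k) * 2 ^ (n + 1) * M ^ (n + 1) ≤ (t + k) * 2 ^ (n + 1 + 1) * M ^ (n + 1) := by
        gcongr <;> omega
      nlinarith

lemma mul_pow_add_mul_pow_succ_le {Q c M ε : ℝ} {n : ℕ} (hε : 0 ≤ ε) (hM : 0 ≤ M)
    (hQ : Q ≤ ε * M) (hc : 1 ≤ c) :
    Q * M ^ n + c * M ^ (n + 1) ≤ (1 + ε) * c * M ^ (n + 1) := by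
  have hMn : 0 ≤ M ^ n := pow_nonneg hM n
  calc Q * M ^ n + c * M ^ (n + 1) ≤ ε * M * M ^ n + c * M ^ (n + 1) := by gcongr
    _ = ε * M ^ (n + 1) + c * M ^ (n + 1) := by ring
    _ ≤ ε * (c * M ^ (n + 1)) + c * M ^ (n + 1) := by
        gcongr; exact le_mul_of_one_le_left (by positivity) hc
    _ = _ := by ring

lemma two_pow_add_one_pow_le {n r t k M m : ℕ} {ε : ℝ} (hε : 0 < ε) (hn : n ≠ 0) (hk : 0 < k)
    (hr : r ≤ t) (hM : ((1 + t + k) * 2 ^ (n + 1) : ℝ) ≤ ε * M)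
    (hm : (2 : ℝ) ^ ((1 + ε) * ((k * (n + 1) * (n + 2) * 2 ^ (n + 1) : ℕ) : ℝ) * (M : ℝ) ^ (n + 1))
      ≤ m) :
    (2 ^ ((r + k) * (2 * M) ^ (n - 1) + k * (n + 1) * (n + 2) * (2 * M) ^ n) + 1) ^ (2 * M)
      ≤ m := by
  set w := (r + k) * (2 * M) ^ (n - 1) + k * (n + 1) * (n + 2) * (2 * M) ^ n
  set c := k * (n + 1) * (n + 2) * 2 ^ (n + 1)
  have hpow : (2 ^ w + 1) ^ (2 * M) ≤ 2 ^ ((w + 1) * (2 * M)) := by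
    have h2w : 2 ^ w + 1 ≤ 2 ^ (w + 1) := by
      rw [pow_succ]; linarith [Nat.one_le_two_pow (n := w)]
    exact (Nat.pow_le_pow_left h2w _).trans_eq (pow_mul 2 (w + 1) (2 * M)).symm
  have hexp : (w + 1) * (2 * M) ≤ (1 + t + k) * 2 ^ (n + 1) * M ^ n + c * M ^ (n + 1) :=
    add_one_mul_two_mul_le hn hr
  have hreal : (((1 + t + k) * 2 ^ (n + 1) * M ^ n + c * M ^ (n + 1) : ℕ) : ℝ) ≤
      (1 + ε) * c * (M : ℝ) ^ (n + 1) := by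
    push_cast
    have hc : (1 : ℝ) ≤ c := by exact_mod_cast Nat.one_le_iff_ne_zero.2 (by positivity)
    exact mul_pow_add_mul_pow_succ_le hε.le (Nat.cast_nonneg M) hM hc
  have : ((2 ^ ((w + 1) * (2 * M)) : ℕ) : ℝ) ≤ m := by
    calc ((2 ^ ((w + 1) * (2 * M)) : ℕ) : ℝ)
        ≤ (2 : ℝ) ^ ((((1 + t + k) * 2 ^ (n + 1) * M ^ n + c * M ^ (n + 1) : ℕ) : ℝ)) := by
          rw [Real.rpow_natCast]; push_cast
          exact pow_le_pow_right₀ one_le_two (by exact_mod_cast hexp)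
      _ ≤ (2 : ℝ) ^ ((1 + ε) * c * (M : ℝ) ^ (n + 1)) :=
          Real.rpow_le_rpow_of_exponent_le one_le_two hreal
      _ ≤ m := hm
  exact hpow.trans (by exact_mod_cast this)

/-- Ramification step (Claim 1.2). -/
theorem ramification_step :
    ∀ nstar kstar : ℕ, 1 < nstar → 0 < kstar →
    ∃ c₁ : ℕ, ∀ t : ℕ, 0 < t → ∀ ε : ℝ, 0 < ε →
    ∃ mthr : ℕ, ∀ mstar : ℕ, mthr ≤ mstar → ∀ m : ℕ,
      (2 : ℝ) ^ ((1 + ε) * (c₁ : ℝ) * (mstar : ℝ) ^ nstar) ≤ (m : ℝ) →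
      ∀ (α β : Type) (A : Finset ℕ), m < A.card →
      ∀ (f : ℕ → Finset ℕ → α) (h : ℕ → Finset ℕ → ℕ) (g : Finset ℕ → β),
        (∃ R : Finset β, R.card ≤ t ∧ ∀ u ∈ A.powersetCard nstar, g u ∈ R) →
        ∃ Astar : Finset ℕ, Astar ⊆ A ∧ mstar < Astar.card ∧
        ∃ jstar ∈ A, (∀ x ∈ Astar, x < jstar) ∧
          ∀ k < kstar, ∀ u ∈ Astar.powersetCard (nstar - 1),
            ∀ v ∈ Astar.powersetCard (nstar - 1),
            -- (α)
            (Neighbors u v →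
              ∀ i ∈ above Astar (u ∪ v),
                (f k (insert i u) = f k (insert i v) ↔
                 f k (insert jstar u) = f k (insert jstar v))) ∧
            -- (β)
            (∀ i₀ ∈ above Astar u, ∀ i₁ ∈ above Astar u, i₀ < i₁ →
              (f k (insert i₀ u) = f k (insert i₁ u) ↔
               f k (insert i₀ u) = f k (insert jstar u))) ∧
            -- (γ)
            (∀ i ∈ above Astar u, g (insert i u) = g (insert jstar u)) ∧
            -- (δ)
            ((∀ i ∈ insert jstar (above Astar u), i ≤ h k u) ∨
             (∀ i ∈ insert jstar (above Astar u), h k u < i)) := by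
  intro nstar kstar hnstar hk
  obtain ⟨n, rfl⟩ : ∃ n, nstar = n + 1 := ⟨nstar - 1, by omega⟩
  have hn : n ≠ 0 := by omega
  refine ⟨kstar * (n + 1) * (n + 2) * 2 ^ (n + 1), fun t _ ε hε =>
    ⟨2 + ⌈(1 + t + kstar) * 2 ^ (n + 1) / ε⌉₊, ?_⟩⟩
  rintro mstar hmstar m hm α β A hA f h g ⟨R, hRt, hgR⟩
  have hM : ((1 + t + kstar) * 2 ^ (n + 1) : ℝ) ≤ ε * mstar :=
    (div_le_iff₀' hε).1 (Nat.ceil_le.1 (by omega))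
  obtain ⟨E, hEA, hEcard, hE⟩ := exists_isEndHomogeneousOver_empty
    (c := questionType f h g n kstar R) (questionType_mem_powerset f h g n kstar R)
    (fun D a hD => prod_card_powerset_questions_le n kstar R hD.le a)
    ((two_pow_add_one_pow_le hε hn hk hRt hM hm).trans hA.le)
  have hEne : E.Nonempty := card_pos.1 (by omega)
  refine ⟨E.erase (E.max' hEne), (erase_subset _ _).trans hEA,
    by rw [card_erase_of_mem (max'_mem _ _)]; omega, E.max' hEne, hEA (max'_mem _ _),
    fun x hx => lt_max'_of_mem_erase_max' _ _ hx, ?_⟩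
  rw [Nat.add_sub_cancel]
  exact (hE.typesAgreeAt hEne).ramification hn
    fun w hw => hgR w (powersetCard_mono ((erase_subset _ _).trans hEA) hw)
end

section
/- Claim 1.4(1): Let k(*) > 0 and suppose m(1) ≥ (k(*) · m(0))^{k(*)+1}. Let A' ⊆ ℕ with |A'| ≥ m(1), and for each k < k(*) let h_k be a function from A' into ℕ with h_k(i) ≥ i for all i ∈ A'. Then there is A'' ⊆ A' with |A''| ≥ m(0) such that for each k < k(*): either for all i, j ∈ A'' with i < j one has h_k(i) ≥ j, or for all i, j ∈ A'' with i < j one has h_k(i) < j. -/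
/-!
For a single function `f`, the pairs `i < j` with `f i < j` form a strict partial order, and
"small" / "large" sets are its chains / antichains. Rank each `j ∈ B` by the size of the
longest small chain in `B` that `j` can extend on top. This rank is monotone and strictly
increases along every small pair. If some `h k` has rank at least `L` somewhere, we get a small
chain of size `L` for `h k` and recurse inside it on the remaining functions. Otherwise the sum
of the ranks takes fewer than `k* · L` values, and on a fiber of this sum (a monotone sum of
monotone functions) every rank is constant, so every `h k` is large there.
-/

open Finset

variable {α : Type*} [LinearOrder α]

def IsLargeOn (f : α → α) (A : Finset α) : Prop :=
  ∀ i ∈ A, ∀ j ∈ A, i < j → j ≤ f i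

def IsSmallOn (f : α → α) (A : Finset α) : Prop :=
  ∀ i ∈ A, ∀ j ∈ A, i < j → f i < j

theorem IsSmallOn.mono {f : α → α} {A C : Finset α} (hC : IsSmallOn f C) (hAC : A ⊆ C) :
    IsSmallOn f A :=
  fun i hi j hj hij => hC i (hAC hi) j (hAC hj) hij

theorem IsSmallOn.insert {f : α → α} {C : Finset α} {j : α} (hC : IsSmallOn f C)
    (hj : ∀ a ∈ C, a < j ∧ f a < j) : IsSmallOn f (insert j C) := by
  intro a ha b hb hab
  rw [mem_insert] at ha hb
  rcases ha with rfl | ha <;> rcases hb with rfl | hb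
  · exact absurd hab (lt_irrefl _)
  · exact absurd hab (hj b hb).1.asymm
  · exact (hj a ha).2
  · exact hC a ha b hb hab

instance (f : α → α) : DecidablePred (IsSmallOn f) :=
  fun C => by unfold IsSmallOn; infer_instance

def smallChainsBelow (f : α → α) (B : Finset α) (j : α) : Finset (Finset α) :=
  B.powerset.filter fun C => IsSmallOn f C ∧ ∀ a ∈ C, a < j ∧ f a < j

def chainRank (f : α → α) (B : Finset α) (j : α) : ℕ :=
  (smallChainsBelow f B j).sup card

section chainRank

variable {f : α → α} {B : Finset α}

theorem mem_smallChainsBelow {j : α} {C : Finset α} :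
    C ∈ smallChainsBelow f B j ↔ C ⊆ B ∧ IsSmallOn f C ∧ ∀ a ∈ C, a < j ∧ f a < j := by
  rw [smallChainsBelow, mem_filter, mem_powerset]

theorem empty_mem_smallChainsBelow (j : α) : ∅ ∈ smallChainsBelow f B j :=
  mem_smallChainsBelow.2 ⟨empty_subset B, fun _ h => absurd h (notMem_empty _), by simp⟩

theorem smallChainsBelow_mono {i j : α} (hij : i ≤ j) :
    smallChainsBelow f B i ⊆ smallChainsBelow f B j := by
  intro C hC
  obtain ⟨hCB, hCsmall, hCbelow⟩ := mem_smallChainsBelow.1 hC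
  exact mem_smallChainsBelow.2 ⟨hCB, hCsmall, fun a ha =>
    ⟨(hCbelow a ha).1.trans_le hij, (hCbelow a ha).2.trans_le hij⟩⟩

theorem chainRank_mono : Monotone (chainRank f B) :=
  fun _ _ hij => sup_mono (smallChainsBelow_mono hij)

theorem exists_isSmallOn_card_eq_chainRank (j : α) :
    ∃ C ⊆ B, IsSmallOn f C ∧ C.card = chainRank f B j := by
  obtain ⟨C, hC, hcard⟩ := exists_mem_eq_sup _ ⟨∅, empty_mem_smallChainsBelow j⟩ card
  obtain ⟨hCB, hCsmall, -⟩ := mem_smallChainsBelow.1 hC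
  exact ⟨C, hCB, hCsmall, hcard.symm⟩

theorem chainRank_lt_of_lt_of_apply_lt {i j : α} (hi : i ∈ B) (hij : i < j) (hsmall : f i < j) :
    chainRank f B i < chainRank f B j := by
  obtain ⟨C, hC, hcard⟩ := exists_mem_eq_sup _ ⟨∅, empty_mem_smallChainsBelow i⟩ card
  obtain ⟨hCB, hCsmall, hCbelow⟩ := mem_smallChainsBelow.1 hC
  have hiC : i ∉ C := fun h => lt_irrefl i (hCbelow i h).1
  have hext : insert i C ∈ smallChainsBelow f B j := by
    refine mem_smallChainsBelow.2 ⟨insert_subset hi hCB, hCsmall.insert hCbelow, fun a ha => ?_⟩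
    rcases mem_insert.1 ha with rfl | ha
    · exact ⟨hij, hsmall⟩
    · exact ⟨(hCbelow a ha).1.trans hij, (hCbelow a ha).2.trans hij⟩
  calc chainRank f B i = C.card := hcard
    _ < (insert i C).card := by rw [card_insert_of_notMem hiC]; exact Nat.lt_succ_self _
    _ ≤ chainRank f B j := le_sup hext

end chainRank

variable {ι : Type*}

theorem isLargeOn_of_sum_chainRank_eq (h : ι → α → α) (S : Finset ι) {A B : Finset α}
    (hAB : A ⊆ B)
    (hA : ∀ i ∈ A, ∀ j ∈ A, ∑ k ∈ S, chainRank (h k) B i = ∑ k ∈ S, chainRank (h k) B j) :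
    ∀ k ∈ S, IsLargeOn (h k) A := by
  intro k hk i hi j hj hij
  by_contra! hsmall
  have hlt : ∑ k ∈ S, chainRank (h k) B i < ∑ k ∈ S, chainRank (h k) B j :=
    sum_lt_sum (fun k _ => chainRank_mono hij.le)
      ⟨k, hk, chainRank_lt_of_lt_of_apply_lt (hAB hi) hij hsmall⟩
  exact hlt.ne (hA i hi j hj)

theorem exists_isLargeOn_of_chainRank_lt (h : ι → α → α) (S : Finset ι) (B : Finset α)
    {L m : ℕ} (hL : ∀ k ∈ S, ∀ i ∈ B, chainRank (h k) B i < L)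
    (hB : (S.card * (L - 1) + 1) * m ≤ B.card) :
    ∃ A ⊆ B, m ≤ A.card ∧ ∀ k ∈ S, IsLargeOn (h k) A := by
  set σ : α → ℕ := fun i => ∑ k ∈ S, chainRank (h k) B i
  have hσ : ∀ i ∈ B, σ i ∈ range (S.card * (L - 1) + 1) := by
    intro i hi
    have : σ i ≤ S.card • (L - 1) :=
      sum_le_card_nsmul _ _ _ fun k hk => Nat.le_pred_of_lt (hL k hk i hi)
    rw [smul_eq_mul] at this
    exact mem_range.2 (Nat.lt_succ_of_le this)
  obtain ⟨y, -, hy⟩ := exists_le_card_fiber_of_mul_le_card_of_maps_to hσ ⟨0, mem_range.2 (Nat.succ_pos _)⟩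
    (by rwa [card_range])
  refine ⟨B.filter (σ · = y), filter_subset _ _, hy,
    isLargeOn_of_sum_chainRank_eq h S (filter_subset _ _) fun i hi j hj => ?_⟩
  exact (mem_filter.1 hi).2.trans (mem_filter.1 hj).2.symm

theorem exists_subset_isLargeOn_or_isSmallOn [DecidableEq ι] (h : ι → α → α) (K m : ℕ)
    (S : Finset ι) (hSK : S.card ≤ K) (B : Finset α) (hB : (K * m) ^ S.card * m ≤ B.card) :
    ∃ A ⊆ B, m ≤ A.card ∧ ∀ k ∈ S, IsLargeOn (h k) A ∨ IsSmallOn (h k) A := by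
  rcases Nat.eq_zero_or_pos m with rfl | hm
  · exact ⟨∅, empty_subset B, le_rfl, fun _ _ => Or.inl fun _ h => absurd h (notMem_empty _)⟩
  induction S using Finset.strongInduction generalizing B with
  | H S ih =>
  rcases S.eq_empty_or_nonempty with rfl | hS
  · exact ⟨B, Subset.refl B, by simpa using hB, by simp⟩
  set L := (K * m) ^ (S.card - 1) * m
  have hcardS : S.card - 1 + 1 = S.card := Nat.sub_add_cancel hS.card_pos
  by_cases hchain : ∃ k ∈ S, ∃ j ∈ B, L ≤ chainRank (h k) B j
  · obtain ⟨k, hk, j, -, hj⟩ := hchain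
    obtain ⟨C, hCB, hCsmall, hC⟩ := exists_isSmallOn_card_eq_chainRank (f := h k) (B := B) j
    obtain ⟨A, hAC, hA, hhom⟩ := ih (S.erase k) (erase_ssubset hk)
      ((card_erase_le).trans hSK) C (by rw [card_erase_of_mem hk]; omega)
    refine ⟨A, hAC.trans hCB, hA, fun k' hk' => ?_⟩
    rcases eq_or_ne k' k with rfl | hne
    · exact Or.inr (hCsmall.mono hAC)
    · exact hhom k' (mem_erase.2 ⟨hne, hk'⟩)
  · push Not at hchain
    have hcount : (S.card * (L - 1) + 1) * m ≤ B.card := by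
      have hL : 0 < L := by have : 0 < K := hS.card_pos.trans_le hSK; positivity
      calc (S.card * (L - 1) + 1) * m ≤ K * L * m := by
            gcongr
            calc S.card * (L - 1) + 1 ≤ S.card * L := by
                  rw [Nat.mul_sub_one]; have := Nat.le_mul_of_pos_right S.card hL; omega
              _ ≤ K * L := Nat.mul_le_mul_right L hSK
        _ = (K * m) ^ S.card * m := by rw [← hcardS, pow_succ]; ring
        _ ≤ B.card := hB
    obtain ⟨A, hAB, hA, hlarge⟩ := exists_isLargeOn_of_chainRank_lt h S B hchain hcount
    exact ⟨A, hAB, hA, fun k hk => Or.inl (hlarge k hk)⟩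

theorem claim_1_4_1_general (kstar m0 m1 : ℕ) (hk : 0 < kstar)
    (hm : (kstar * m0) ^ (kstar + 1) ≤ m1)
    (A' : Finset ℕ) (hA : m1 ≤ A'.card)
    (h : ℕ → ℕ → ℕ) :
    ∃ A'' : Finset ℕ, A'' ⊆ A' ∧ m0 ≤ A''.card ∧
      ∀ k < kstar,
        (∀ i ∈ A'', ∀ j ∈ A'', i < j → j ≤ h k i) ∨
        (∀ i ∈ A'', ∀ j ∈ A'', i < j → h k i < j) := by
  have hcard : (kstar * m0) ^ (range kstar).card * m0 ≤ A'.card :=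
    calc (kstar * m0) ^ (range kstar).card * m0
        ≤ (kstar * m0) ^ kstar * (kstar * m0) := by
          rw [card_range]; exact Nat.mul_le_mul_left _ (Nat.le_mul_of_pos_left m0 hk)
      _ = (kstar * m0) ^ (kstar + 1) := (pow_succ _ _).symm
      _ ≤ A'.card := hm.trans hA
  obtain ⟨A'', hsub, hm0, hhom⟩ :=
    exists_subset_isLargeOn_or_isSmallOn h kstar m0 (range kstar) (card_range _).le A' hcard
  exact ⟨A'', hsub, hm0, fun k hk => hhom k (mem_range.2 hk)⟩

/-- Claim 1.4(1): if `m₁ ≥ (k* · m₀)^{k*+1}` and `A' ⊆ ℕ` has at least `m₁`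
elements, and for each `k < k*`, `h k` satisfies `h k i ≥ i` on `A'`, then there
is `A'' ⊆ A'` of size at least `m₀` on which each `h k` is uniformly "large"
(`h k i ≥ j` for all `i < j` in `A''`) or uniformly "small" (`h k i < j`). -/
theorem claim_1_4_1 (kstar m0 m1 : ℕ) (hk : 0 < kstar)
    (hm : (kstar * m0) ^ (kstar + 1) ≤ m1)
    (A' : Finset ℕ) (hA : m1 ≤ A'.card)
    (h : ℕ → ℕ → ℕ) (hh : ∀ k < kstar, ∀ i ∈ A', i ≤ h k i) :
    ∃ A'' : Finset ℕ, A'' ⊆ A' ∧ m0 ≤ A''.card ∧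
      ∀ k < kstar,
        (∀ i ∈ A'', ∀ j ∈ A'', i < j → j ≤ h k i) ∨
        (∀ i ∈ A'', ∀ j ∈ A'', i < j → h k i < j) :=
  claim_1_4_1_general kstar m0 m1 hk hm A' hA h
end

section
/- Strengthened bound for Claim 1.4(1): Let k(*) > 0 and suppose m(1) > k(*)! · m(0)^{k(*)+1}. Let A' ⊆ ℕ with |A'| ≥ m(1), and for each k < k(*) let h_k be a function from A' into ℕ with h_k(i) ≥ i for all i ∈ A'. Then there is A'' ⊆ A' with |A''| ≥ m(0) such that for each k < k(*): either for all i, j ∈ A'' with i < j one has h_k(i) ≥ j, or for all i, j ∈ A'' with i < j one has h_k(i) < j. -/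
/-!
Put `H i = min_k h_k i` and order `ℕ` by `i ≺ j ↔ i < j ∧ H i < j`. By Mirsky's theorem `A'`
contains a `≺`-chain with more than `k* · (k* - 1)! · m₀ ^ k*` elements or a `≺`-antichain with
more than `m₀` elements. On an antichain every `h_k` reaches every later element. On a chain,
colour each `i` by a `k` attaining the minimum `H i`: some colour class has more than
`(k* - 1)! · m₀ ^ k*` elements, `h_k` falls short of every later element on it, and we recurse on
that class with the remaining `k* - 1` functions.
-/

open Finset
open scoped Nat

theorem Fintype.exists_isChain_or_isAntichain_of_mul_lt_card {α : Type*} [Fintype α]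
    [PartialOrder α] {a b : ℕ} (h : a * b < Fintype.card α) :
    (∃ t : Finset α, IsChain (· ≤ ·) (t : Set α) ∧ a < #t) ∨
      ∃ t : Finset α, IsAntichain (· ≤ ·) (t : Set α) ∧ b < #t := by
  classical
  by_cases hhigh : ∃ x : α, (a : ℕ∞) ≤ Order.height x
  · obtain ⟨x, hx⟩ := hhigh
    obtain ⟨p, -, hp⟩ := Order.exists_series_of_le_height x hx
    refine Or.inl ⟨univ.image p, ?_, ?_⟩
    · rw [coe_image, coe_univ, Set.image_univ]
      exact p.strictMono.monotone.isChain_range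
    · rw [card_image_of_injective _ p.strictMono.injective, card_univ, Fintype.card_fin, hp]
      omega
  · simp only [not_exists, not_le] at hhigh
    have hfin (x : α) : ((Order.height x).toNat : ℕ∞) = Order.height x :=
      ENat.natCast_toNat (ne_top_of_lt (hhigh x))
    have hmaps : ∀ x ∈ (univ : Finset α), (Order.height x).toNat ∈ range a := fun x _ => by
      have := hhigh x
      rw [← hfin x] at this
      exact mem_range.2 (mod_cast this)
    -- the levels of the height function are antichains
    obtain ⟨n, -, hn⟩ := exists_lt_card_fiber_of_mul_lt_card_of_maps_to hmaps
      (by rwa [Finset.card_range, Finset.card_univ])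
    refine Or.inr ⟨_, fun x hx y hy hne hxy => ?_, hn⟩
    simp only [coe_filter, mem_univ, true_and, Set.mem_ofPred_eq] at hx hy
    have := Order.height_strictMono (hne.lt_of_le hxy) (hhigh x |>.trans (ENat.natCast_lt_top a))
    rw [← hfin x, ← hfin y, hx, hy] at this
    exact lt_irrefl _ this

theorem Finset.exists_isChain_or_isAntichain_of_mul_lt_card {α : Type*} {r : α → α → Prop}
    [IsStrictOrder α r] {s : Finset α} {a b : ℕ} (h : a * b < #s) :
    (∃ t ⊆ s, IsChain r (t : Set α) ∧ a < #t) ∨ ∃ t ⊆ s, IsAntichain r (t : Set α) ∧ b < #t := by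
  let := partialOrderOfSO r
  rcases Fintype.exists_isChain_or_isAntichain_of_mul_lt_card (α := s) (by simpa using h) with
    ⟨t, ht, hcard⟩ | ⟨t, ht, hcard⟩
  · refine Or.inl ⟨t.map (.subtype _), map_subtype_subset t, ?_, by rwa [card_map]⟩
    rw [coe_map, Function.Embedding.coe_subtype]
    exact ht.lt_of_le.image_of_map_rel _ r Subtype.val fun _ _ hxy => hxy
  · refine Or.inr ⟨t.map (.subtype _), map_subtype_subset t, ?_, by rwa [card_map]⟩
    rw [coe_map, Function.Embedding.coe_subtype]
    exact ht.image _ fun _ _ hxy => (show _ < _ from hxy).le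

def FarBelow (H : ℕ → ℕ) (i j : ℕ) : Prop := i < j ∧ H i < j

instance (H : ℕ → ℕ) : IsStrictOrder ℕ (FarBelow H) where
  irrefl i hi := lt_irrefl i hi.1
  trans _ _ _ hij hjk := ⟨hij.1.trans hjk.1, hij.2.trans hjk.1⟩

def ReachesOn (f : ℕ → ℕ) (B : Finset ℕ) : Prop := ∀ i ∈ B, ∀ j ∈ B, i < j → j ≤ f i

def FallsShortOn (f : ℕ → ℕ) (B : Finset ℕ) : Prop := ∀ i ∈ B, ∀ j ∈ B, i < j → f i < j

theorem IsAntichain.reachesOn {H : ℕ → ℕ} {T : Finset ℕ}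
    (hT : IsAntichain (FarBelow H) (T : Set ℕ)) : ReachesOn H T :=
  fun _ hi _ hj hij => Nat.not_lt.1 fun hHij => hT hi hj hij.ne ⟨hij, hHij⟩

theorem IsChain.fallsShortOn {H : ℕ → ℕ} {C : Finset ℕ}
    (hC : IsChain (FarBelow H) (C : Set ℕ)) : FallsShortOn H C :=
  fun _ hi _ hj hij => ((hC hi hj hij.ne).resolve_right fun hji => hij.not_gt hji.1).2

theorem exists_subset_forall_reachesOn_or_fallsShortOn {ι : Type*} [DecidableEq ι] (m : ℕ)
    (h : ι → ℕ → ℕ) (K : Finset ι) (A : Finset ℕ) (hA : (#K)! * m ^ (#K + 1) < #A) :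
    ∃ B ⊆ A, m ≤ #B ∧ ∀ k ∈ K, ReachesOn (h k) B ∨ FallsShortOn (h k) B := by
  induction K using Finset.strongInduction generalizing A with | H K ih => ?_
  rcases K.eq_empty_or_nonempty with rfl | hK
  · exact ⟨A, subset_rfl, by simpa using hA.le, by simp⟩
  choose c hcK hcH using fun i => K.exists_mem_eq_inf' hK (h · i)
  set H : ℕ → ℕ := fun i => K.inf' hK (h · i)
  obtain ⟨n, hn⟩ : ∃ n, #K = n + 1 := Nat.exists_eq_succ_of_ne_zero (card_ne_zero.2 hK)
  have hA' : #K * (n ! * m ^ (n + 1)) * m < #A := by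
    rw [hn, Nat.factorial_succ] at hA
    rw [hn]
    convert hA using 1
    ring
  rcases exists_isChain_or_isAntichain_of_mul_lt_card (r := FarBelow H) hA' with
    ⟨C, hCA, hC, hCcard⟩ | ⟨T, hTA, hT, hTcard⟩
  · obtain ⟨k, hk, hkC⟩ := exists_lt_card_fiber_of_mul_lt_card_of_maps_to (fun x _ => hcK x) hCcard
    obtain ⟨B, hB, hBcard, hBK⟩ := ih (K.erase k) (erase_ssubset hk) _
      (by rwa [card_erase_of_mem hk, hn, Nat.add_sub_cancel])
    refine ⟨B, hB.trans ((filter_subset _ _).trans hCA), hBcard, fun k' hk' => ?_⟩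
    by_cases hkk : k' = k
    · subst hkk
      refine Or.inr fun i hi j hj hij => ?_
      obtain ⟨hiC, rfl⟩ := mem_filter.1 (hB hi)
      rw [← hcH i]
      exact hC.fallsShortOn i hiC j (mem_filter.1 (hB hj)).1 hij
    · exact hBK k' (mem_erase.2 ⟨hkk, hk'⟩)
  · exact ⟨T, hTA, hTcard.le, fun k hk => Or.inl fun i hi j hj hij =>
      (hT.reachesOn i hi j hj hij).trans (K.inf'_le _ hk)⟩

theorem claim_1_4_1_strengthened_general (kstar m0 m1 : ℕ)
    (hm : Nat.factorial kstar * m0 ^ (kstar + 1) < m1)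
    (A' : Finset ℕ) (hA : m1 ≤ A'.card)
    (h : ℕ → ℕ → ℕ) :
    ∃ A'' : Finset ℕ, A'' ⊆ A' ∧ m0 ≤ A''.card ∧
      ∀ k < kstar,
        (∀ i ∈ A'', ∀ j ∈ A'', i < j → j ≤ h k i) ∨
        (∀ i ∈ A'', ∀ j ∈ A'', i < j → h k i < j) := by
  obtain ⟨A'', hsub, hcard, hhom⟩ := exists_subset_forall_reachesOn_or_fallsShortOn m0 h
    (range kstar) A' (by rw [card_range]; omega)
  exact ⟨A'', hsub, hcard, fun k hk => hhom k (mem_range.2 hk)⟩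

/-- Strengthened bound for Claim 1.4(1): the same conclusion already under the
weaker hypothesis `m₁ > k*! · m₀^{k*+1}`. -/
theorem claim_1_4_1_strengthened (kstar m0 m1 : ℕ) (hk : 0 < kstar)
    (hm : Nat.factorial kstar * m0 ^ (kstar + 1) < m1)
    (A' : Finset ℕ) (hA : m1 ≤ A'.card)
    (h : ℕ → ℕ → ℕ) (hh : ∀ k < kstar, ∀ i ∈ A', i ≤ h k i) :
    ∃ A'' : Finset ℕ, A'' ⊆ A' ∧ m0 ≤ A''.card ∧
      ∀ k < kstar,
        (∀ i ∈ A'', ∀ j ∈ A'', i < j → j ≤ h k i) ∨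
        (∀ i ∈ A'', ∀ j ∈ A'', i < j → h k i < j) :=
  claim_1_4_1_strengthened_general kstar m0 m1 hm A' hA h
end

section
/- Interval/chain dichotomy (from the proof of Claim 1.4(1)): Let M ≥ 1, N ≥ M, and let h : {1, …, N} → ℕ satisfy h(i) ≥ i for all i. Then either there exists ℓ with 1 ≤ ℓ ≤ N − M + 1 such that h(α) ≥ ℓ + M for every α ∈ [ℓ, ℓ + M), or there exist α_1 < α_2 < ⋯ < α_s in {1, …, N} with s = ⌊N/M⌋ such that h(α_p) < α_{p+1} for every p with 1 ≤ p < s. -/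
/-- Interval/chain dichotomy (from the proof of Claim 1.4(1)): if `h(i) ≥ i` on
`{1, …, N}` and `1 ≤ M ≤ N`, then either some interval `[ℓ, ℓ+M)` with
`1 ≤ ℓ ≤ N−M+1` satisfies `h(α) ≥ ℓ+M` throughout, or there is a strictly
increasing chain `α_1 < ⋯ < α_s` in `{1, …, N}` with `s = ⌊N/M⌋` and
`h(α_p) < α_{p+1}` for `1 ≤ p < s`. -/
theorem interval_chain_dichotomy (M N : ℕ) (hM : 1 ≤ M) (hN : M ≤ N)
    (h : ℕ → ℕ) (hh : ∀ i, 1 ≤ i → i ≤ N → i ≤ h i) :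
    (∃ l : ℕ, 1 ≤ l ∧ l ≤ N - M + 1 ∧ ∀ a, l ≤ a → a < l + M → l + M ≤ h a) ∨
    (∃ a : ℕ → ℕ,
      (∀ p, 1 ≤ p → p ≤ N / M → 1 ≤ a p ∧ a p ≤ N) ∧
      (∀ p, 1 ≤ p → p + 1 ≤ N / M → a p < a (p + 1) ∧ h (a p) < a (p + 1))) := by
  by_cases H : ∃ l : ℕ, 1 ≤ l ∧ l ≤ N - M + 1 ∧ ∀ a, l ≤ a → a < l + M → l + M ≤ h a
  · exact Or.inl H
  · right
    push_neg at H
    have key : ∀ p : ℕ, ∃ a, 1 ≤ p → p ≤ N / M →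
        (p - 1) * M + 1 ≤ a ∧ a ≤ p * M ∧ h a < p * M + 1 := by
      intro p
      by_cases hp : 1 ≤ p ∧ p ≤ N / M
      · obtain ⟨hp1, hps⟩ := hp
        have hpM : p * M ≤ N := (Nat.le_div_iff_mul_le hM).mp hps
        have he : (p - 1) * M = p * M - M := Nat.sub_one_mul p M
        have hMp : M ≤ p * M := Nat.le_mul_of_pos_left M hp1
        obtain ⟨a, ha1, ha2, ha3⟩ := H ((p - 1) * M + 1) (by omega) (by omega)
        exact ⟨a, fun _ _ => ⟨ha1, by omega, by omega⟩⟩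
      · exact ⟨0, fun h1 h2 => absurd ⟨h1, h2⟩ hp⟩
    choose f hf using key
    refine ⟨f, ?_, ?_⟩
    · intro p hp hps
      obtain ⟨h1, h2, h3⟩ := hf p hp hps
      have hpM : p * M ≤ N := (Nat.le_div_iff_mul_le hM).mp hps
      omega
    · intro p hp hps
      obtain ⟨h1, h2, h3⟩ := hf p (by omega) (by omega)
      obtain ⟨g1, g2, g3⟩ := hf (p + 1) (by omega) hps
      rw [Nat.add_sub_cancel] at g1
      omega
end
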